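/- With X, the trees T_n, the arcs I_i, the homeomorphisms h_i : I_i → [0,1], T = ⋃_n T_n, and d(x, y) = Σ_{i=1}^∞ 2^{−i} · l(h_i([x, y] ∩ I_i)) as in the standing construction, d is a convex metric on T. -/

import Mathlib

/-- `A` is an arc in `X` joining `x` and `y`: the image of a continuous injection
from `[0,1]` sending `0` to `x` and `1` to `y`. -/
def IsArcBetween {X : Type*} [TopologicalSpace X] (A : Set X) (x y : X) : Prop :=
  ∃ f : unitInterval → X, Continuous f ∧ Function.Injective f ∧
    f 0 = x ∧ f 1 = y ∧ Set.range f = A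

/-- `A` is an arc in `X` (a subspace homeomorphic to `[0,1]`). -/
def IsArc {X : Type*} [TopologicalSpace X] (A : Set X) : Prop :=
  ∃ x y, IsArcBetween A x y

/-- `X` is uniquely arcwise connected: any two distinct points are joined by a unique arc. -/
def UniquelyArcwiseConnected (X : Type*) [TopologicalSpace X] : Prop :=
  ∀ x y : X, x ≠ y → ∃! A : Set X, IsArcBetween A x y

/-- A dendrite: a (metrizable) continuum which is locally connected and uniquely
arcwise connected. -/
def IsDendrite (X : Type*) [TopologicalSpace X] : Prop :=
  Nonempty X ∧ CompactSpace X ∧ ConnectedSpace X ∧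
    TopologicalSpace.MetrizableSpace X ∧ LocallyConnectedSpace X ∧
    UniquelyArcwiseConnected X

/-- A subset `Y` of `X` is a tree: it is a dendrite (with the subspace topology)
which is the union of finitely many arcs. -/
def IsTree {X : Type*} [TopologicalSpace X] (Y : Set X) : Prop :=
  IsDendrite Y ∧ ∃ (n : ℕ) (A : Fin n → Set X), (∀ i, IsArc (A i)) ∧ Y = ⋃ i, A i

/-- The arc `[x, y]` in a uniquely arcwise connected space (`{x}` if `x = y`). -/
noncomputable def arcOf {X : Type*} [TopologicalSpace X]
    (hX : UniquelyArcwiseConnected X) (x y : X) : Set X :=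
  letI : Decidable (x = y) := Classical.dec _
  if h : x = y then {x} else (hX x y h).choose

/-- The standing construction: in a uniquely arcwise connected continuum `X`, a strictly
increasing sequence of trees `T n = I 0 ∪ ... ∪ I n` built from arcs `I i` meeting
pairwise in at most a point, together with homeomorphisms `h i : I i → [0,1]`. -/
structure StandingConstruction (X : Type*) [MetricSpace X] where
  /-- `X` is uniquely arcwise connected. -/
  huac : UniquelyArcwiseConnected X
  /-- the arcs `I i` -/
  I : ℕ → Set X
  arc_I : ∀ i, IsArc (I i)
  /-- distinct arcs meet in at most one point -/
  inter_I : ∀ i j, i ≠ j → (I i ∩ I j).Subsingleton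
  /-- each partial union `T n = ⋃_{i ≤ n} I i` is a tree -/
  tree_T : ∀ n : ℕ, IsTree (⋃ i ≤ n, I i)
  /-- the sequence of trees is strictly increasing -/
  strict_T : ∀ n : ℕ, (⋃ i ≤ n, I i) ⊂ ⋃ i ≤ n + 1, I i
  /-- the homeomorphisms `h i : I i → [0,1]` -/
  h : ℕ → X → ℝ
  h_cont : ∀ i, ContinuousOn (h i) (I i)
  h_inj : ∀ i, Set.InjOn (h i) (I i)
  h_image : ∀ i, h i '' I i = Set.Icc (0 : ℝ) 1

/-- The tree `T n` of the standing construction. -/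
def StandingConstruction.Tn {X : Type*} [MetricSpace X]
    (sc : StandingConstruction X) (n : ℕ) : Set X :=
  ⋃ i ≤ n, sc.I i

/-- The set `T = ⋃ n T n` of the standing construction. -/
def StandingConstruction.T {X : Type*} [MetricSpace X]
    (sc : StandingConstruction X) : Set X :=
  ⋃ i, sc.I i

/-- The metric `d(x,y) = ∑ i 2^{-(i+1)} l(h i ([x,y] ∩ I i))` of the standing
construction, where `l` is the length (diameter) of a subinterval of `[0,1]`. -/
noncomputable def StandingConstruction.d {X : Type*} [MetricSpace X]
    (sc : StandingConstruction X) (x y : X) : ℝ :=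
  ∑' i : ℕ, (2 : ℝ)⁻¹ ^ (i + 1) *
    Metric.diam (sc.h i '' (arcOf sc.huac x y ∩ sc.I i))

/-!
Each summand of `d x y` is a weighted length of `h_i([x, y] ∩ I_i)`, an interval because
`[x, y] ∩ I_i` is connected: two of its points are joined by an arc lying in both `[x, y]`
and `I_i`. Symmetry and monotonicity under `[u, v] ⊆ [x, y]` hold summand by summand, and so
does the triangle inequality, since `[x, z] ⊆ [x, y] ∪ [y, z]` and the length of an interval
is subadditive under coverings. If `d x y = 0`, then `[x, y]` meets every `I_i` in at most
one point; as `[x, y]` lies in a tree `T_n = I_0 ∪ … ∪ I_n`, it is finite, so `x = y`.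
-/

open Set Function unitInterval

section Arcs

variable {X : Type*} [TopologicalSpace X]

theorem IsArcBetween.ne {A : Set X} {x y : X} (h : IsArcBetween A x y) : x ≠ y := by
  obtain ⟨f, -, hf, rfl, rfl, -⟩ := h
  exact hf.ne zero_ne_one

theorem IsArcBetween.symm {A : Set X} {x y : X} (h : IsArcBetween A x y) :
    IsArcBetween A y x := by
  obtain ⟨f, hc, hinj, rfl, rfl, rfl⟩ := h
  refine ⟨f ∘ σ, hc.comp continuous_symm, hinj.comp symm_bijective.injective,
    by simp, by simp, ?_⟩
  rw [range_comp, symm_bijective.surjective.range_eq, image_univ]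

theorem isArcBetween_image_Icc {f : I → X} (hc : Continuous f) (hinj : Injective f)
    {s t : I} (hst : s < t) : IsArcBetween (f '' Icc s t) (f s) (f t) := by
  let e : Icc (s : ℝ) t → I := fun v => ⟨v, s.2.1.trans v.2.1, v.2.2.trans t.2.2⟩
  have he : range e = Icc s t := by
    ext v
    exact ⟨by rintro ⟨w, rfl⟩; exact w.2, fun hv => ⟨⟨v, hv⟩, rfl⟩⟩
  have he_inj : Injective e := fun v w h =>
    Subtype.ext (congrArg Subtype.val h : ((e v : I) : ℝ) = e w)
  let φ := iccHomeoI (s : ℝ) t hst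
  refine ⟨f ∘ e ∘ φ.symm, hc.comp ((by fun_prop : Continuous e).comp φ.symm.continuous),
    hinj.comp (he_inj.comp φ.symm.injective), ?_, ?_, ?_⟩
  · exact congrArg f (Subtype.ext (by simp [e, φ]))
  · exact congrArg f (Subtype.ext (by simp [e, φ]))
  · rw [range_comp, range_comp, φ.symm.surjective.range_eq, image_univ, he]

theorem arcOf_self (hX : UniquelyArcwiseConnected X) (x : X) : arcOf hX x x = {x} := by
  simp [arcOf]

theorem isArcBetween_arcOf (hX : UniquelyArcwiseConnected X) {x y : X} (h : x ≠ y) :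
    IsArcBetween (arcOf hX x y) x y := by
  simpa [arcOf, h] using (hX x y h).choose_spec.1

theorem arcOf_eq_of_isArcBetween (hX : UniquelyArcwiseConnected X) {A : Set X} {x y : X}
    (h : IsArcBetween A x y) : arcOf hX x y = A := by
  simpa [arcOf, h.ne] using ((hX x y h.ne).choose_spec.2 A h).symm

theorem arcOf_comm (hX : UniquelyArcwiseConnected X) (x y : X) :
    arcOf hX x y = arcOf hX y x := by
  rcases eq_or_ne x y with rfl | h
  · rfl
  · exact arcOf_eq_of_isArcBetween hX (isArcBetween_arcOf hX h.symm).symm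

theorem left_mem_arcOf (hX : UniquelyArcwiseConnected X) (x y : X) : x ∈ arcOf hX x y := by
  rcases eq_or_ne x y with rfl | h
  · simp [arcOf_self]
  · obtain ⟨f, -, -, hf0, -, hfr⟩ := isArcBetween_arcOf hX h
    exact hfr ▸ hf0 ▸ mem_range_self 0

theorem right_mem_arcOf (hX : UniquelyArcwiseConnected X) (x y : X) : y ∈ arcOf hX x y :=
  arcOf_comm hX x y ▸ left_mem_arcOf hX y x

theorem isCompact_arcOf (hX : UniquelyArcwiseConnected X) (x y : X) :
    IsCompact (arcOf hX x y) := by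
  rcases eq_or_ne x y with rfl | h
  · simp [arcOf_self]
  · obtain ⟨f, hc, -, -, -, hfr⟩ := isArcBetween_arcOf hX h
    exact hfr ▸ isCompact_range hc

theorem isPreconnected_arcOf (hX : UniquelyArcwiseConnected X) (x y : X) :
    IsPreconnected (arcOf hX x y) := by
  rcases eq_or_ne x y with rfl | h
  · simpa [arcOf_self] using isPreconnected_singleton
  · obtain ⟨f, hc, -, -, -, hfr⟩ := isArcBetween_arcOf hX h
    exact hfr ▸ isPreconnected_range hc

theorem IsArcBetween.arcOf_subset (hX : UniquelyArcwiseConnected X) {A : Set X} {x y : X}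
    (hA : IsArcBetween A x y) {p q : X} (hp : p ∈ A) (hq : q ∈ A) : arcOf hX p q ⊆ A := by
  obtain ⟨f, hc, hinj, -, -, rfl⟩ := hA
  obtain ⟨s, rfl⟩ := hp
  obtain ⟨t, rfl⟩ := hq
  rcases lt_trichotomy s t with hst | rfl | hst
  · rw [arcOf_eq_of_isArcBetween hX (isArcBetween_image_Icc hc hinj hst)]
    exact image_subset_range f _
  · simp [arcOf_self]
  · rw [arcOf_comm, arcOf_eq_of_isArcBetween hX (isArcBetween_image_Icc hc hinj hst)]
    exact image_subset_range f _

theorem arcOf_subset_arcOf (hX : UniquelyArcwiseConnected X) {x y p q : X}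
    (hp : p ∈ arcOf hX x y) (hq : q ∈ arcOf hX x y) : arcOf hX p q ⊆ arcOf hX x y := by
  rcases eq_or_ne x y with rfl | hxy
  · rw [arcOf_self] at hp hq ⊢
    rw [hp, hq, arcOf_self]
  · exact (isArcBetween_arcOf hX hxy).arcOf_subset hX hp hq

theorem isPreconnected_arcOf_inter (hX : UniquelyArcwiseConnected X) (x y : X)
    {B : Set X} (hB : IsArc B) : IsPreconnected (arcOf hX x y ∩ B) := by
  obtain ⟨u, v, hB⟩ := hB
  refine isPreconnected_of_forall_pair fun p hp q hq => ⟨arcOf hX p q,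
    subset_inter (arcOf_subset_arcOf hX hp.1 hq.1) (hB.arcOf_subset hX hp.2 hq.2),
    left_mem_arcOf hX p q, right_mem_arcOf hX p q, isPreconnected_arcOf hX p q⟩

theorem Path.trans_injective {x w z : X} {p : Path x w} {q : Path w z} (hp : Injective p)
    (hq : Injective q) (hpq : range p ∩ range q ⊆ {w}) : Injective (p.trans q) := by
  have meet : ∀ a b, p a = q b → (b : ℝ) = 0 := fun a b h => by
    have hw : q b = w := hpq ⟨h ▸ mem_range_self a, mem_range_self b⟩
    rw [hq (hw.trans q.source.symm)]; rfl
  intro s t hst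
  simp only [Path.trans_apply] at hst
  split_ifs at hst with hs ht ht
  · have := congrArg Subtype.val (hp hst); ext; simp only at this; linarith
  · have := meet _ _ hst; simp only at this; linarith
  · have := meet _ _ hst.symm; simp only at this; linarith
  · have := congrArg Subtype.val (hq hst); ext; simp only at this; linarith

theorem IsArcBetween.union {x w z : X} {A B : Set X} (hA : IsArcBetween A x w)
    (hB : IsArcBetween B w z) (hAB : A ∩ B ⊆ {w}) : IsArcBetween (A ∪ B) x z := by
  obtain ⟨f, hfc, hfi, hf0, hf1, rfl⟩ := hA
  obtain ⟨g, hgc, hgi, hg0, hg1, rfl⟩ := hB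
  let p : Path x w := ⟨⟨f, hfc⟩, hf0, hf1⟩
  let q : Path w z := ⟨⟨g, hgc⟩, hg0, hg1⟩
  exact ⟨p.trans q, (p.trans q).continuous, Path.trans_injective hfi hgi hAB,
    (p.trans q).source, (p.trans q).target, Path.trans_range p q⟩

theorem arcOf_subset_union [T2Space X] (hX : UniquelyArcwiseConnected X) (x y z : X) :
    arcOf hX x z ⊆ arcOf hX x y ∪ arcOf hX y z := by
  rcases eq_or_ne x y with rfl | hxy
  · exact subset_union_right
  obtain ⟨f, hfc, hfi, hf0, hf1, hfr⟩ := isArcBetween_arcOf hX hxy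
  set B := arcOf hX y z
  -- `f s` is the first point of `[x, y]` on `[y, z]`.
  obtain ⟨s, hsB, hs⟩ : ∃ s, IsLeast (f ⁻¹' B) s :=
    ((isCompact_arcOf hX y z).isClosed.preimage hfc).isCompact.exists_isLeast
      ⟨1, by simp [hf1, left_mem_arcOf]⟩
  have hsB' : f s ∈ B := hsB
  have hfs : f s ∈ arcOf hX x y := hfr ▸ mem_range_self s
  rcases eq_or_ne s 0 with rfl | hs0
  · exact (arcOf_subset_arcOf hX (hf0 ▸ hsB') (right_mem_arcOf hX y z)).trans subset_union_right
  rcases eq_or_ne (f s) z with hz | hz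
  · exact (arcOf_subset_arcOf hX (left_mem_arcOf hX x y) (hz ▸ hfs)).trans subset_union_left
  have hwz : arcOf hX (f s) z ⊆ B := arcOf_subset_arcOf hX hsB' (right_mem_arcOf hX y z)
  have hxw : IsArcBetween (f '' Icc 0 s) x (f s) :=
    hf0 ▸ isArcBetween_image_Icc hfc hfi (pos_iff_ne_zero.2 hs0)
  have hmeet : f '' Icc 0 s ∩ arcOf hX (f s) z ⊆ {f s} := by
    rintro _ ⟨⟨u, hu, rfl⟩, huB⟩
    rw [le_antisymm hu.2 (hs (hwz huB))]
    rfl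
  rw [arcOf_eq_of_isArcBetween hX (hxw.union (isArcBetween_arcOf hX hz) hmeet)]
  exact union_subset_union (hfr ▸ image_subset_range f _) hwz

theorem IsArcBetween.infinite {A : Set X} {x y : X} (h : IsArcBetween A x y) : A.Infinite := by
  obtain ⟨f, -, hf, -, -, rfl⟩ := h
  have : Infinite I := Set.Icc.infinite zero_lt_one
  exact infinite_range_of_injective hf

theorem IsArcBetween.image_val {Y : Set X} {A : Set Y} {x y : Y} (h : IsArcBetween A x y) :
    IsArcBetween (Subtype.val '' A) (x : X) y := by
  obtain ⟨f, hc, hinj, rfl, rfl, rfl⟩ := h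
  exact ⟨Subtype.val ∘ f, continuous_subtype_val.comp hc, Subtype.val_injective.comp hinj,
    rfl, rfl, range_comp _ _⟩

theorem arcOf_subset_of_uniquelyArcwiseConnected (hX : UniquelyArcwiseConnected X) {Y : Set X}
    (hY : UniquelyArcwiseConnected Y) {x y : X} (hx : x ∈ Y) (hy : y ∈ Y) :
    arcOf hX x y ⊆ Y := by
  rcases eq_or_ne x y with rfl | hxy
  · simpa [arcOf_self] using hx
  obtain ⟨A, hA, -⟩ := hY ⟨x, hx⟩ ⟨y, hy⟩ (by simpa using hxy)
  rw [arcOf_eq_of_isArcBetween hX hA.image_val]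
  exact Subtype.coe_image_subset Y A

theorem IsTree.uniquelyArcwiseConnected {Y : Set X} (h : IsTree Y) :
    UniquelyArcwiseConnected Y :=
  h.1.2.2.2.2.2

end Arcs

open Metric Bornology MeasureTheory in
/-- `ediam = volume` on intervals, and `volume ≤ ediam` for all sets. -/
theorem Real.diam_le_diam_add_diam_of_subset_union {s t u : Set ℝ} (hs : IsPreconnected s)
    (ht : IsBounded t) (hu : IsBounded u) (h : s ⊆ t ∪ u) : diam s ≤ diam t + diam u := by
  have hsb : IsBounded s := (ht.union hu).subset h
  have hs_vol : ediam s ≤ volume s := by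
    rcases s.eq_empty_or_nonempty with rfl | hne
    · simp
    rw [Real.ediam_eq hsb, ← Real.volume_Ioo]
    exact measure_mono (IsConnected.Ioo_csInf_csSup_subset ⟨hne, hs⟩ hsb.bddBelow hsb.bddAbove)
  have key : ediam s ≤ ediam t + ediam u := calc
    ediam s ≤ volume s := hs_vol
    _ ≤ volume t + volume u := (measure_mono h).trans (measure_union_le t u)
    _ ≤ ediam t + ediam u := add_le_add (Real.volume_le_diam t) (Real.volume_le_diam u)
  rw [diam, diam, diam, ← ENNReal.toReal_add ht.ediam_ne_top hu.ediam_ne_top]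
  exact ENNReal.toReal_mono (ENNReal.add_ne_top.2 ⟨ht.ediam_ne_top, hu.ediam_ne_top⟩) key

namespace StandingConstruction

variable {X : Type*} [MetricSpace X] (sc : StandingConstruction X)

noncomputable def len (i : ℕ) (x y : X) : ℝ :=
  Metric.diam (sc.h i '' (arcOf sc.huac x y ∩ sc.I i))

theorem d_eq_tsum_len (x y : X) : sc.d x y = ∑' i, (2 : ℝ)⁻¹ ^ (i + 1) * sc.len i x y := rfl

theorem image_arcOf_inter_subset_Icc (i : ℕ) (x y : X) :
    sc.h i '' (arcOf sc.huac x y ∩ sc.I i) ⊆ Icc 0 1 :=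
  sc.h_image i ▸ image_mono inter_subset_right

theorem isBounded_image_arcOf_inter (i : ℕ) (x y : X) :
    Bornology.IsBounded (sc.h i '' (arcOf sc.huac x y ∩ sc.I i)) :=
  (Metric.isBounded_Icc 0 1).subset (sc.image_arcOf_inter_subset_Icc i x y)

theorem len_le_one (i : ℕ) (x y : X) : sc.len i x y ≤ 1 := by
  have := Metric.diam_mono (sc.image_arcOf_inter_subset_Icc i x y) (Metric.isBounded_Icc 0 1)
  rwa [Real.diam_Icc zero_le_one, sub_zero] at this

theorem weighted_len_nonneg (i : ℕ) (x y : X) : 0 ≤ (2 : ℝ)⁻¹ ^ (i + 1) * sc.len i x y :=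
  mul_nonneg (by positivity) Metric.diam_nonneg

theorem summable_weighted_len (x y : X) :
    Summable fun i => (2 : ℝ)⁻¹ ^ (i + 1) * sc.len i x y :=
  .of_nonneg_of_le (sc.weighted_len_nonneg · x y)
    (fun i => mul_le_of_le_one_right (by positivity) (sc.len_le_one i x y))
    ((summable_nat_add_iff 1).2 (summable_geometric_of_lt_one (by norm_num) (by norm_num)))

theorem len_self (i : ℕ) (x : X) : sc.len i x x = 0 := by
  rw [len, arcOf_self]
  exact Metric.diam_subsingleton ((subsingleton_singleton.anti inter_subset_left).image _)

theorem len_comm (i : ℕ) (x y : X) : sc.len i x y = sc.len i y x := by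
  rw [len, len, arcOf_comm]

theorem len_le_len_add_len (i : ℕ) (x y z : X) :
    sc.len i x z ≤ sc.len i x y + sc.len i y z := by
  refine Real.diam_le_diam_add_diam_of_subset_union ?_ (sc.isBounded_image_arcOf_inter i x y)
    (sc.isBounded_image_arcOf_inter i y z) ?_
  · exact (isPreconnected_arcOf_inter sc.huac x z (sc.arc_I i)).image _
      ((sc.h_cont i).mono inter_subset_right)
  · rw [← image_union, ← union_inter_distrib_right]
    exact image_mono (inter_subset_inter_left _ (arcOf_subset_union sc.huac x y z))

theorem len_mono (i : ℕ) {u v x y : X} (h : arcOf sc.huac u v ⊆ arcOf sc.huac x y) :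
    sc.len i u v ≤ sc.len i x y :=
  Metric.diam_mono (image_mono (inter_subset_inter_left _ h))
    (sc.isBounded_image_arcOf_inter i x y)

theorem subsingleton_arcOf_inter_of_len_eq_zero {i : ℕ} {x y : X} (h : sc.len i x y = 0) :
    (arcOf sc.huac x y ∩ sc.I i).Subsingleton := by
  have himage : (sc.h i '' (arcOf sc.huac x y ∩ sc.I i)).Subsingleton := by
    rw [← Metric.ediam_eq_zero_iff]
    exact (ENNReal.toReal_eq_zero_iff _).1 h |>.resolve_right
      (sc.isBounded_image_arcOf_inter i x y).ediam_ne_top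
  exact fun p hp q hq =>
    sc.h_inj i hp.2 hq.2 (himage (mem_image_of_mem _ hp) (mem_image_of_mem _ hq))

theorem len_eq_zero_of_d_eq_zero {x y : X} (h : sc.d x y = 0) (i : ℕ) : sc.len i x y = 0 := by
  have hi : (2 : ℝ)⁻¹ ^ (i + 1) * sc.len i x y = 0 :=
    le_antisymm (h ▸ (sc.summable_weighted_len x y).le_tsum i fun j _ =>
      sc.weighted_len_nonneg j x y) (sc.weighted_len_nonneg i x y)
  simpa using hi

theorem I_subset_Tn {i n : ℕ} (hin : i ≤ n) : sc.I i ⊆ sc.Tn n :=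
  subset_biUnion_of_mem (u := sc.I) hin

theorem eq_of_d_eq_zero {x y : X} (hx : x ∈ sc.T) (hy : y ∈ sc.T) (h : sc.d x y = 0) :
    x = y := by
  by_contra hxy
  obtain ⟨m, hxm⟩ := mem_iUnion.1 hx
  obtain ⟨k, hyk⟩ := mem_iUnion.1 hy
  have harc : arcOf sc.huac x y ⊆ sc.Tn (max m k) :=
    arcOf_subset_of_uniquelyArcwiseConnected sc.huac (sc.tree_T _).uniquelyArcwiseConnected
      (sc.I_subset_Tn (le_max_left m k) hxm) (sc.I_subset_Tn (le_max_right m k) hyk)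
  refine (isArcBetween_arcOf sc.huac hxy).infinite <|
    ((finite_Iic (max m k)).biUnion fun i _ =>
      (sc.subsingleton_arcOf_inter_of_len_eq_zero (sc.len_eq_zero_of_d_eq_zero h i)).finite).subset
      fun p hp => ?_
  obtain ⟨i, hi, hpi⟩ := mem_iUnion₂.1 (harc hp)
  exact mem_iUnion₂.2 ⟨i, hi, hp, hpi⟩

theorem d_self (x : X) : sc.d x x = 0 := by
  simp [d_eq_tsum_len, len_self]

theorem d_comm (x y : X) : sc.d x y = sc.d y x := by
  simp only [d_eq_tsum_len, len_comm sc _ x y]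

theorem d_le_d_add_d (x y z : X) : sc.d x z ≤ sc.d x y + sc.d y z := by
  simp only [d_eq_tsum_len]
  rw [← (sc.summable_weighted_len x y).tsum_add (sc.summable_weighted_len y z)]
  refine (sc.summable_weighted_len x z).tsum_le_tsum (fun i => ?_)
    ((sc.summable_weighted_len x y).add (sc.summable_weighted_len y z))
  rw [← mul_add]
  exact mul_le_mul_of_nonneg_left (sc.len_le_len_add_len i x y z) (by positivity)

theorem d_le_d_of_arcOf_subset {u v x y : X} (h : arcOf sc.huac u v ⊆ arcOf sc.huac x y) :
    sc.d u v ≤ sc.d x y :=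
  (sc.summable_weighted_len u v).tsum_le_tsum
    (fun i => mul_le_mul_of_nonneg_left (sc.len_mono i h) (by positivity))
    (sc.summable_weighted_len x y)

end StandingConstruction

theorem sc_d_isConvexMetric_general
    {X : Type*} [MetricSpace X]
    (sc : StandingConstruction X) :
    (∀ x ∈ sc.T, ∀ y ∈ sc.T, (sc.d x y = 0 ↔ x = y)) ∧
    (∀ x ∈ sc.T, ∀ y ∈ sc.T, sc.d x y = sc.d y x) ∧
    (∀ x ∈ sc.T, ∀ y ∈ sc.T, ∀ z ∈ sc.T, sc.d x z ≤ sc.d x y + sc.d y z) ∧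
    (∀ u ∈ sc.T, ∀ v ∈ sc.T, ∀ x ∈ sc.T, ∀ y ∈ sc.T,
      arcOf sc.huac u v ⊆ arcOf sc.huac x y → sc.d u v ≤ sc.d x y) :=
  ⟨fun x hx _ hy => ⟨sc.eq_of_d_eq_zero hx hy, fun h => h ▸ sc.d_self x⟩,
    fun x _ y _ => sc.d_comm x y,
    fun x _ y _ z _ => sc.d_le_d_add_d x y z,
    fun _ _ _ _ _ _ _ _ h => sc.d_le_d_of_arcOf_subset h⟩

/-- **Section 3.1.** The function `d` of the standing construction is a convex metric
on `T`: it satisfies separation, symmetry and the triangle inequality on `T`, and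
`d(u,v) ≤ d(x,y)` whenever `[u,v] ⊆ [x,y]`. -/
theorem sc_d_isConvexMetric
    {X : Type*} [MetricSpace X] [CompactSpace X] [ConnectedSpace X] [Nonempty X]
    (sc : StandingConstruction X) :
    (∀ x ∈ sc.T, ∀ y ∈ sc.T, (sc.d x y = 0 ↔ x = y)) ∧
    (∀ x ∈ sc.T, ∀ y ∈ sc.T, sc.d x y = sc.d y x) ∧
    (∀ x ∈ sc.T, ∀ y ∈ sc.T, ∀ z ∈ sc.T, sc.d x z ≤ sc.d x y + sc.d y z) ∧
    (∀ u ∈ sc.T, ∀ v ∈ sc.T, ∀ x ∈ sc.T, ∀ y ∈ sc.T,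
      arcOf sc.huac u v ⊆ arcOf sc.huac x y → sc.d u v ≤ sc.d x y) :=
  sc_d_isConvexMetric_general sc
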